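/- arXiv:1803.03864 — 6 statements merged into one kernel-verified Lean document; each statement's English description precedes it below -/
import Mathlib

section
/- Let S = {S_i} be a scalar sequence over a field F annihilated by a monic polynomial f of degree d (i.e., Σ_{i=0}^d f_i S_{k+i} = 0 for all k ≥ 0), and let g ∈ F[x]. Define the action (gS)_k = Σ_i g_i S_{k+i}, and ω_f(S) = (S_0, ..., S_{d-1})^T ∈ F^d. Then ω_f(gS) = ρ(g)^T · ω_f(S), where ρ is the regular representation of F[x]/(f); equivalently, if φ_f(S) = P·ω_f(S) for a nonsingular P with P·ρ(a)^T = ρ(a)·P for all a, then φ_f(gS) = ρ(g)·φ_f(S). -/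
/-!
Multiplying the window `(S_k, …, S_{k+d-1})` on the right by the companion matrix `ρ(x)` shifts it
to `(S_{k+1}, …, S_{k+d})`, the new last entry being supplied by the recurrence. Hence
`ω(S) ρ(x)^j = ω(x^j S)`, and by linearity `ω(S) ρ(g) = ω(gS)`, i.e. `ω(gS) = ρ(g)ᵀ ω(S)`.
Multiplying by `P` and using `P ρ(g)ᵀ = ρ(g) P` gives the statement for `φ = P ω`.
-/

open Polynomial Matrix

/-- Companion matrix of a (monic) polynomial `f`, of size `d`. -/
def companionMat {F : Type*} [Field F] (f : F[X]) (d : ℕ) : Matrix (Fin d) (Fin d) F :=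
  fun i j => if (j : ℕ) + 1 = d then -f.coeff i else if (i : ℕ) = (j : ℕ) + 1 then 1 else 0

theorem recurrence_add_eq_neg_sum {R : Type*} [CommRing R] {f : R[X]} {d : ℕ} (hfd : f.coeff d = 1)
    {S : ℕ → R} (hS : ∀ k, ∑ i ∈ Finset.range (d + 1), f.coeff i * S (k + i) = 0) (k : ℕ) :
    S (k + d) = -∑ i ∈ Finset.range d, f.coeff i * S (k + i) := by
  have h := hS k
  rw [Finset.sum_range_succ, hfd, one_mul] at h
  exact eq_neg_of_add_eq_zero_right h

theorem vecMul_companionMat {F : Type*} [Field F] {f : F[X]} {d : ℕ} (hfd : f.coeff d = 1)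
    {S : ℕ → F} (hS : ∀ k, ∑ i ∈ Finset.range (d + 1), f.coeff i * S (k + i) = 0) (k : ℕ) :
    (fun i : Fin d => S (k + i)) ᵥ* companionMat f d = fun i : Fin d => S (k + 1 + i) := by
  funext i
  simp only [vecMul, dotProduct, companionMat]
  by_cases hi : (i : ℕ) + 1 = d
  · rw [show k + 1 + (i : ℕ) = k + d by omega, recurrence_add_eq_neg_sum hfd hS,
      ← Fin.sum_univ_eq_sum_range, ← Finset.sum_neg_distrib]
    simp [hi, mul_comm]
  · have hlt : (i : ℕ) + 1 < d := by omega
    have hj : ∀ j : Fin d, (j : ℕ) = i + 1 ↔ j = ⟨i + 1, hlt⟩ := fun j => by rw [Fin.ext_iff]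
    simp only [hi, if_false, hj, mul_ite, mul_one, mul_zero, Fintype.sum_ite_eq']
    congr 1; omega

theorem vecMul_aeval_eq_sum {R : Type*} [CommRing R] {n : Type*} [Fintype n] [DecidableEq n]
    (B : Matrix n n R) (w : ℕ → n → R) (hw : ∀ k, w k ᵥ* B = w (k + 1)) (g : R[X]) :
    w 0 ᵥ* aeval B g = ∑ j ∈ Finset.range (g.natDegree + 1), g.coeff j • w j := by
  have hpow : ∀ j, w 0 ᵥ* B ^ j = w j := by
    intro j
    induction j with
    | zero => exact vecMul_one _
    | succ j ih => rw [pow_succ, ← vecMul_vecMul, ih, hw]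
  rw [aeval_eq_sum_range, vecMul_sum]
  simp only [vecMul_smul, hpow]

theorem aeval_companionMat_transpose_mulVec {F : Type*} [Field F] {f : F[X]} {d : ℕ}
    (hfd : f.coeff d = 1) {S : ℕ → F}
    (hS : ∀ k, ∑ i ∈ Finset.range (d + 1), f.coeff i * S (k + i) = 0) (g : F[X]) :
    (aeval (companionMat f d) g)ᵀ *ᵥ (fun i : Fin d => S i)
      = fun i : Fin d => ∑ j ∈ Finset.range (g.natDegree + 1), g.coeff j * S (i + j) := by
  have h := vecMul_aeval_eq_sum (companionMat f d) (fun k (i : Fin d) => S (k + i))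
    (vecMul_companionMat hfd hS) g
  simp only [zero_add] at h
  rw [mulVec_transpose, h]
  funext i
  simp only [Finset.sum_apply, Pi.smul_apply, smul_eq_mul, add_comm]

theorem stmt3_general {F : Type*} [Field F] (f : F[X]) (d : ℕ)
    (hf : f.Monic) (hdeg : f.natDegree = d)
    (S : ℕ → F) (hS : ∀ k : ℕ, ∑ i ∈ Finset.range (d + 1), f.coeff i * S (k + i) = 0)
    (g : F[X]) :
    ((fun i : Fin d => ∑ j ∈ Finset.range (g.natDegree + 1), g.coeff j * S ((i : ℕ) + j))
        = (Polynomial.aeval (companionMat f d) g)ᵀ *ᵥ (fun i : Fin d => S (i : ℕ)))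
    ∧ ∀ P : Matrix (Fin d) (Fin d) F, P.det ≠ 0 →
        (∀ a : F[X], P * (Polynomial.aeval (companionMat f d) a)ᵀ
            = Polynomial.aeval (companionMat f d) a * P) →
        P *ᵥ (fun i : Fin d => ∑ j ∈ Finset.range (g.natDegree + 1), g.coeff j * S ((i : ℕ) + j))
          = Polynomial.aeval (companionMat f d) g *ᵥ (P *ᵥ fun i : Fin d => S (i : ℕ)) := by
  have hfd : f.coeff d = 1 := hdeg ▸ hf.coeff_natDegree
  have hω := (aeval_companionMat_transpose_mulVec hfd hS g).symm
  refine ⟨hω, fun P _ hP => ?_⟩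
  rw [hω, mulVec_mulVec, mulVec_mulVec, hP g]

/-- For a scalar sequence `S` annihilated by monic `f` of degree `d` and `g ∈ F[x]`:
`ω_f(gS) = ρ(g)ᵀ ω_f(S)`, and consequently, for any nonsingular `P` intertwining `ρᵀ`
and `ρ`, `φ_f(gS) = ρ(g) φ_f(S)` where `φ_f(S) = P ω_f(S)`. -/
theorem stmt3 {F : Type*} [Field F] (f : F[X]) (d : ℕ) (hd : 1 ≤ d)
    (hf : f.Monic) (hdeg : f.natDegree = d)
    (S : ℕ → F) (hS : ∀ k : ℕ, ∑ i ∈ Finset.range (d + 1), f.coeff i * S (k + i) = 0)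
    (g : F[X]) :
    ((fun i : Fin d => ∑ j ∈ Finset.range (g.natDegree + 1), g.coeff j * S ((i : ℕ) + j))
        = (Polynomial.aeval (companionMat f d) g)ᵀ *ᵥ (fun i : Fin d => S (i : ℕ)))
    ∧ ∀ P : Matrix (Fin d) (Fin d) F, P.det ≠ 0 →
        (∀ a : F[X], P * (Polynomial.aeval (companionMat f d) a)ᵀ
            = Polynomial.aeval (companionMat f d) a * P) →
        P *ᵥ (fun i : Fin d => ∑ j ∈ Finset.range (g.natDegree + 1), g.coeff j * S ((i : ℕ) + j))
          = Polynomial.aeval (companionMat f d) g *ᵥ (P *ᵥ fun i : Fin d => S (i : ℕ)) :=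
  stmt3_general f d hf hdeg S hS g
end

section
/- Let f ∈ F_q[x] be irreducible of degree d, C_f its companion matrix, and U, V ∈ F_q^{d×b} with columns U_1,...,U_b and V_1,...,V_b. Then the (i,j)-entry of the sequence S_k = U^T C_f^k V satisfies ω_f(S_{·,ij}) = ρ(V_j)^T U_i, where ω_f maps the sequence to the column vector of its first d terms and ρ is the regular representation of F_q[x]/(f). Consequently φ_f(S) := P·ω_f(S) applied entrywise equals the outer product (in the field F_q[x]/(f) ≅ F_{q^d}) of the vector (P U_1, ..., P U_b) and the vector (V_1, ..., V_b), where P is a nonsingular matrix with Pρ(a)^T = ρ(a)P for all a. -/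
open Polynomial Matrix

/-- The polynomial with coefficient vector `v`. -/
noncomputable def vecToPoly {F : Type*} [Field F] {d : ℕ} (v : Fin d → F) : F[X] :=
  ∑ i : Fin d, Polynomial.C (v i) * Polynomial.X ^ (i : ℕ)

/-! Identify `Fin d → F` with the polynomials of degree `< d` through `vecToPoly`. Under this
identification `C_f` is multiplication by `X` modulo `f`, so `aeval C_f a` is multiplication by `a`
modulo `f`. Hence column `l` of `ρ(V_j) = aeval C_f (V_j)` is `X^l V_j mod f = C_f^l V_j`, which is
the first identity; moving `P` past `ρ(V_j)ᵀ` by the intertwining property gives the second. -/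

section CompanionMat

variable {F : Type*} [Field F] {f : F[X]} {d : ℕ}

theorem coeff_vecToPoly (v : Fin d → F) (n : ℕ) :
    (vecToPoly v).coeff n = ∑ i : Fin d, if n = i then v i else 0 := by
  simp [vecToPoly, finsetSum_coeff]

theorem coeff_X_mul_vecToPoly (v : Fin d → F) (n : ℕ) :
    (X * vecToPoly v).coeff n = ∑ i : Fin d, if n = i + 1 then v i else 0 := by
  simp only [vecToPoly, Finset.mul_sum, finsetSum_coeff]
  refine Finset.sum_congr rfl fun i _ => ?_
  rw [mul_left_comm, ← pow_succ', coeff_C_mul_X_pow]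

theorem coeff_vecToPoly_val (v : Fin d → F) (i : Fin d) : (vecToPoly v).coeff i = v i := by
  simp [coeff_vecToPoly, Fin.val_inj]

theorem vecToPoly_injective : Function.Injective (vecToPoly : (Fin d → F) → F[X]) :=
  fun v w h => funext fun i => by rw [← coeff_vecToPoly_val v, h, coeff_vecToPoly_val]

theorem degree_vecToPoly_lt (v : Fin d → F) : (vecToPoly v).degree < d := by
  refine degree_lt_iff_coeff_zero _ _ |>.2 fun n hn => ?_
  rw [coeff_vecToPoly]
  exact Finset.sum_eq_zero fun i _ => if_neg (by omega)

theorem vecToPoly_add (v w : Fin d → F) : vecToPoly (v + w) = vecToPoly v + vecToPoly w := by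
  simp [vecToPoly, Finset.sum_add_distrib, add_mul]

theorem vecToPoly_smul (c : F) (v : Fin d → F) : vecToPoly (c • v) = C c * vecToPoly v := by
  simp [vecToPoly, Finset.mul_sum, mul_assoc]

theorem vecToPoly_single_one (l : Fin d) : vecToPoly (Pi.single l (1 : F)) = X ^ (l : ℕ) := by
  simp [vecToPoly, Pi.single_apply]

theorem vecToPoly_modByMonic (hmonic : f.Monic) (hd : f.natDegree = d)
    (v : Fin d → F) : vecToPoly v %ₘ f = vecToPoly v := by
  rw [modByMonic_eq_self_iff hmonic, degree_eq_natDegree hmonic.ne_zero, hd]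
  exact degree_vecToPoly_lt v

theorem companionMat_mulVec_apply (w : Fin d → F) (i : Fin d) :
    (companionMat f d *ᵥ w) i
      = (X * vecToPoly w).coeff i - f.coeff i * (vecToPoly w).coeff (d - 1) := by
  rw [coeff_X_mul_vecToPoly, coeff_vecToPoly, Finset.mul_sum, ← Finset.sum_sub_distrib, mulVec,
    dotProduct]
  refine Finset.sum_congr rfl fun j _ => ?_
  have := i.isLt
  have := j.isLt
  simp only [companionMat]
  split_ifs <;> first | (exfalso; omega) | ring

theorem X_mul_vecToPoly (hmonic : f.Monic) (hd : f.natDegree = d) (w : Fin d → F) :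
    X * vecToPoly w
      = vecToPoly (companionMat f d *ᵥ w) + f * C ((vecToPoly w).coeff (d - 1)) := by
  ext n
  rw [coeff_add, coeff_mul_C]
  rcases lt_or_ge n d with hn | hn
  · obtain ⟨i, rfl⟩ : ∃ i : Fin d, (i : ℕ) = n := ⟨⟨n, hn⟩, rfl⟩
    rw [coeff_vecToPoly_val, companionMat_mulVec_apply]
    ring
  · have hf : f.coeff n = if n = d then 1 else 0 := by
      split_ifs with h
      · rw [h, ← hd]; exact hmonic.coeff_natDegree
      · exact coeff_eq_zero_of_natDegree_lt (by omega)
    rw [coeff_vecToPoly, Finset.sum_eq_zero fun j _ => if_neg (by omega), hf,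
      coeff_X_mul_vecToPoly, coeff_vecToPoly]
    split_ifs with h
    · rw [zero_add, one_mul]
      refine Finset.sum_congr rfl fun j _ => ?_
      have := j.isLt
      exact if_congr (by omega) rfl rfl
    · rw [zero_add, zero_mul]
      exact Finset.sum_eq_zero fun j _ => if_neg (by omega)

theorem vecToPoly_companionMat_mulVec (hmonic : f.Monic) (hd : f.natDegree = d)
    (w : Fin d → F) : vecToPoly (companionMat f d *ᵥ w) = (X * vecToPoly w) %ₘ f := by
  refine ((div_modByMonic_unique _ _ hmonic ⟨(X_mul_vecToPoly hmonic hd w).symm, ?_⟩).2).symm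
  rw [degree_eq_natDegree hmonic.ne_zero, hd]
  exact degree_vecToPoly_lt _

theorem mul_modByMonic_right (hmonic : f.Monic) (a p : F[X]) :
    (a * (p %ₘ f)) %ₘ f = (a * p) %ₘ f :=
  modByMonic_eq_of_dvd_sub hmonic <| by
    rw [← mul_sub]; exact dvd_mul_of_dvd_right (dvd_modByMonic_sub p f) a

theorem vecToPoly_aeval_companionMat_mulVec (hmonic : f.Monic) (hd : f.natDegree = d)
    (a : F[X]) (w : Fin d → F) :
    vecToPoly (aeval (companionMat f d) a *ᵥ w) = (a * vecToPoly w) %ₘ f := by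
  induction a using Polynomial.induction_on generalizing w with
  | C c =>
    rw [aeval_C, Algebra.algebraMap_eq_smul_one, smul_mulVec, one_mulVec, vecToPoly_smul,
      ← vecToPoly_smul, vecToPoly_modByMonic hmonic hd]
  | add p q hp hq => rw [map_add, add_mulVec, vecToPoly_add, hp, hq, add_mul, add_modByMonic]
  | monomial n c ih =>
    rw [pow_succ, ← mul_assoc, _root_.map_mul, aeval_X, ← mulVec_mulVec, ih,
      vecToPoly_companionMat_mulVec hmonic hd, mul_modByMonic_right hmonic]
    simp only [mul_assoc]

theorem companionMat_pow_mulVec (hmonic : f.Monic) (hd : f.natDegree = d) (w : Fin d → F)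
    (l : Fin d) :
    companionMat f d ^ (l : ℕ) *ᵥ w
      = aeval (companionMat f d) (vecToPoly w) *ᵥ Pi.single l 1 := by
  apply vecToPoly_injective
  rw [← aeval_X_pow (R := F), vecToPoly_aeval_companionMat_mulVec hmonic hd,
    vecToPoly_aeval_companionMat_mulVec hmonic hd, vecToPoly_single_one, mul_comm]

end CompanionMat

theorem stmt7_general {F : Type*} [Field F] (f : F[X])
    (hmonic : f.Monic) (d : ℕ) (hd : f.natDegree = d) (b : ℕ)
    (U V : Matrix (Fin d) (Fin b) F)
    (P : Matrix (Fin d) (Fin d) F)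
    (hPint : ∀ a : F[X], P * (Polynomial.aeval (companionMat f d) a)ᵀ
        = Polynomial.aeval (companionMat f d) a * P) :
    (∀ i j : Fin b,
        (fun l : Fin d => (Uᵀ * companionMat f d ^ (l : ℕ) * V) i j)
          = (Polynomial.aeval (companionMat f d) (vecToPoly (Vᵀ j)))ᵀ *ᵥ Uᵀ i)
    ∧ (∀ i j : Fin b,
        vecToPoly (P *ᵥ fun l : Fin d => (Uᵀ * companionMat f d ^ (l : ℕ) * V) i j)
          = (vecToPoly (Vᵀ j) * vecToPoly (P *ᵥ Uᵀ i)) %ₘ f) := by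
  have sequence_eq : ∀ i j : Fin b,
      (fun l : Fin d => (Uᵀ * companionMat f d ^ (l : ℕ) * V) i j)
        = (aeval (companionMat f d) (vecToPoly (Vᵀ j)))ᵀ *ᵥ Uᵀ i := by
    intro i j
    funext l
    calc (Uᵀ * companionMat f d ^ (l : ℕ) * V) i j
        = Uᵀ i ⬝ᵥ (companionMat f d ^ (l : ℕ) *ᵥ Vᵀ j) := by
          rw [Matrix.mul_assoc, mul_apply']; rfl
      _ = Uᵀ i ⬝ᵥ (aeval (companionMat f d) (vecToPoly (Vᵀ j)))ᵀ l := by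
          rw [companionMat_pow_mulVec hmonic hd, mulVec_single_one]; rfl
      _ = _ := dotProduct_comm _ _
  refine ⟨sequence_eq, fun i j => ?_⟩
  rw [sequence_eq i j, mulVec_mulVec, hPint, ← mulVec_mulVec,
    vecToPoly_aeval_companionMat_mulVec hmonic hd]

/-- Each entry of the projected sequence `S_k = Uᵀ C_f^k V` satisfies
`ω_f(S_{·,ij}) = ρ(V_j)ᵀ U_i`, and hence `φ_f(S) = P ω_f(S)` is (entrywise) the outer product
in `F_q[x]/(f) ≅ F_{q^d}` of the vectors `(P U_i)_i` and `(V_j)_j`. -/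
theorem stmt7 {F : Type*} [Field F] [Fintype F] (f : F[X]) (hf : Irreducible f)
    (hmonic : f.Monic) (d : ℕ) (hd : f.natDegree = d) (hd1 : 1 ≤ d) (b : ℕ)
    (U V : Matrix (Fin d) (Fin b) F)
    (P : Matrix (Fin d) (Fin d) F) (hP : P.det ≠ 0)
    (hPint : ∀ a : F[X], P * (Polynomial.aeval (companionMat f d) a)ᵀ
        = Polynomial.aeval (companionMat f d) a * P) :
    (∀ i j : Fin b,
        (fun l : Fin d => (Uᵀ * companionMat f d ^ (l : ℕ) * V) i j)
          = (Polynomial.aeval (companionMat f d) (vecToPoly (Vᵀ j)))ᵀ *ᵥ Uᵀ i)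
    ∧ (∀ i j : Fin b,
        vecToPoly (P *ᵥ fun l : Fin d => (Uᵀ * companionMat f d ^ (l : ℕ) * V) i j)
          = (vecToPoly (Vᵀ j) * vecToPoly (P *ᵥ Uᵀ i)) %ₘ f) :=
  stmt7_general f hmonic d hd b U V P hPint
end

section
/- Let q ≥ 2, b ≥ 1, and for 1 ≤ r ≤ b let P_t(r) = Σ_{i=r}^{t} Q_{q,b,i}(t) (the probability that a sum of t random outer products over F_q^b has rank at least r), where Q is defined by the recurrence with U_r = (1 − q^{r−b})^2 and D_r = q^{r−1}(q^r−1)/q^{2b}. Then P_t(r) ≥ P_r(r) for all t ≥ r; i.e., adding more outer products can only increase the probability of attaining rank at least r. -/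
/-- `U_r = (1 − 1/q^{b−r})²`. -/
noncomputable def Ufun (q : ℝ) (b : ℕ) (r : ℤ) : ℝ := (1 - 1 / q ^ ((b : ℤ) - r)) ^ 2

/-- `D_r = q^{r−1}(q^r − 1)/q^{2b}`. -/
noncomputable def Dfun (q : ℝ) (b : ℕ) (r : ℤ) : ℝ :=
  q ^ (r - 1) * (q ^ r - 1) / q ^ (2 * (b : ℤ))

/-- The rank-distribution recurrence `Q_{q,b,r}(t)`. -/
noncomputable def Qfun (q : ℝ) (b : ℕ) : ℕ → ℤ → ℝ
  | 0, r => if r = 0 then 1 else 0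
  | (t + 1), r =>
      if r < 0 ∨ r > min ((t : ℤ) + 1) (b : ℤ) then 0
      else Qfun q b t (r - 1) * Ufun q b (r - 1)
           + Qfun q b t r * (1 - Ufun q b r - Dfun q b r)
           + Qfun q b t (r + 1) * Dfun q b (r + 1)

/-!
Write `P_t(r) = ∑_{i ≥ r} Q_{q,b,i}(t)`. Summing the recurrence for `Q` over `i ≥ r` telescopes:
`P_{t+1}(r)` exceeds `P_t(r)` by the net flux `Q_t(r-1) U_{r-1} - Q_t(r) D_r` across the boundary
between ranks `r - 1` and `r`. Rewriting `Q_t(j) = P_t(j) - P_t(j+1)` turns this into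
`P_{t+1}(r) = U_{r-1} P_t(r-1) + (1 - U_{r-1} - D_r) P_t(r) + D_r P_t(r+1)`, whose coefficients are
nonnegative for `1 ≤ r ≤ b` because `D_r ≤ q^{r-1-b} ≤ 1 - U_{r-1}`. Hence `P_t ≤ P_{t+1}`
pointwise propagates from `t` to `t + 1`, while `P_t(0)` is constant.
-/

section Coefficients

variable {q : ℝ} {b : ℕ}

lemma Ufun_nonneg (r : ℤ) : 0 ≤ Ufun q b r := sq_nonneg _

lemma Ufun_self : Ufun q b b = 0 := by simp [Ufun]

lemma Dfun_zero : Dfun q b 0 = 0 := by simp [Dfun]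

lemma Dfun_nonneg (hq : 1 ≤ q) {r : ℤ} (hr : 0 ≤ r) : 0 ≤ Dfun q b r := by
  have : 1 ≤ q ^ r := one_le_zpow₀ hq hr
  unfold Dfun
  positivity

lemma zpow_sub_le_one_sub_Ufun (hq : 1 ≤ q) {r : ℤ} (hr : r ≤ b) :
    q ^ (r - b) ≤ 1 - Ufun q b r := by
  have hx : q ^ (r - b) ≤ 1 := zpow_le_one_of_nonpos₀ hq (by omega)
  have hx0 : 0 < q ^ (r - b) := zpow_pos (by linarith) _
  have : 1 / q ^ ((b : ℤ) - r) = q ^ (r - b) := by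
    rw [one_div, ← zpow_neg, neg_sub]
  rw [Ufun, this]
  nlinarith

lemma Dfun_le_zpow (hq : 1 ≤ q) {r : ℤ} (hr : r ≤ b) : Dfun q b r ≤ q ^ (r - 1 - b) := by
  have hq0 : q ≠ 0 := by positivity
  have hsplit : q ^ (r - 1) * q ^ r / q ^ (2 * (b : ℤ)) = q ^ (r - 1 - b) * q ^ (r - b) := by
    rw [div_eq_mul_inv, ← zpow_neg, ← zpow_add₀ hq0, ← zpow_add₀ hq0, ← zpow_add₀ hq0]
    ring_nf
  have hx : q ^ (r - b) ≤ 1 := zpow_le_one_of_nonpos₀ hq (by omega)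
  calc Dfun q b r ≤ q ^ (r - 1) * q ^ r / q ^ (2 * (b : ℤ)) := by
        unfold Dfun; gcongr; linarith
    _ = q ^ (r - 1 - b) * q ^ (r - b) := hsplit
    _ ≤ q ^ (r - 1 - b) := mul_le_of_le_one_right (by positivity) hx

lemma Ufun_add_Dfun_le_one (hq : 1 ≤ q) {r : ℤ} (hr : r ≤ b) : Ufun q b r + Dfun q b r ≤ 1 := by
  have := zpow_le_zpow_right₀ hq (show r - 1 - b ≤ r - b by omega)
  linarith [Dfun_le_zpow hq hr, zpow_sub_le_one_sub_Ufun hq hr]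

lemma Ufun_add_Dfun_add_one_le_one (hq : 1 ≤ q) {r : ℤ} (hr : r + 1 ≤ b) :
    Ufun q b r + Dfun q b (r + 1) ≤ 1 := by
  have := Dfun_le_zpow hq hr
  rw [add_sub_cancel_right] at this
  linarith [zpow_sub_le_one_sub_Ufun hq (show r ≤ b by omega)]

end Coefficients

section RankDistribution

variable {q : ℝ} {b : ℕ}

lemma Qfun_eq_zero {t : ℕ} {i : ℤ} (h : i < 0 ∨ t < i ∨ b < i) : Qfun q b t i = 0 := by
  cases t with
  | zero => simp only [Qfun, ite_eq_right_iff]; omega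
  | succ t => rw [Qfun, if_pos (by omega)]

lemma Qfun_succ (t : ℕ) {i : ℤ} (h0 : 0 ≤ i) (hb : i ≤ b) :
    Qfun q b (t + 1) i = Qfun q b t (i - 1) * Ufun q b (i - 1)
      + Qfun q b t i * (1 - Ufun q b i - Dfun q b i)
      + Qfun q b t (i + 1) * Dfun q b (i + 1) := by
  rw [Qfun]
  split_ifs with h
  · rw [Qfun_eq_zero (by omega), Qfun_eq_zero (i := i) (by omega),
      Qfun_eq_zero (by omega)]
    ring
  · rfl

lemma Qfun_nonneg (hq : 1 ≤ q) (t : ℕ) (i : ℤ) : 0 ≤ Qfun q b t i := by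
  induction t generalizing i with
  | zero => simp only [Qfun]; split_ifs <;> norm_num
  | succ t ih =>
    rcases lt_or_ge i 0 with hi | hi
    · rw [Qfun_eq_zero (by omega)]
    rcases lt_or_ge (b : ℤ) i with hib | hib
    · rw [Qfun_eq_zero (by omega)]
    rw [Qfun_succ t hi hib]
    have hstay : 0 ≤ 1 - Ufun q b i - Dfun q b i := by linarith [Ufun_add_Dfun_le_one hq hib]
    have := Dfun_nonneg hq (b := b) (show 0 ≤ i + 1 by omega)
    have := Ufun_nonneg (q := q) (b := b) (i - 1)
    have := ih (i - 1); have := ih i; have := ih (i + 1)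
    positivity

noncomputable def Qflux (q : ℝ) (b t : ℕ) (r : ℤ) : ℝ :=
  Qfun q b t (r - 1) * Ufun q b (r - 1) - Qfun q b t r * Dfun q b r

lemma Qflux_zero (t : ℕ) : Qflux q b t 0 = 0 := by
  simp [Qflux, Dfun_zero, Qfun_eq_zero (t := t) (i := -1) (by omega)]

lemma Qflux_eq_zero_of_lt {t : ℕ} {r : ℤ} (h : b < r) : Qflux q b t r = 0 := by
  rw [Qflux, Qfun_eq_zero (i := r) (by omega), zero_mul, sub_zero]
  rcases eq_or_lt_of_le (show (b : ℤ) ≤ r - 1 by omega) with he | hlt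
  · rw [← he, Ufun_self, mul_zero]
  · rw [Qfun_eq_zero (by omega), zero_mul]

lemma Qfun_succ_eq_add_Qflux (t : ℕ) {i : ℤ} (h0 : 0 ≤ i) (hb : i ≤ b) :
    Qfun q b (t + 1) i = Qfun q b t i + Qflux q b t i - Qflux q b t (i + 1) := by
  rw [Qfun_succ t h0 hb, Qflux, Qflux, add_sub_cancel_right]
  ring

/-- The paper's `P_t(r)`, summed up to `b` rather than `t` so that the range of summation does
not depend on `t`. -/
noncomputable def Pfun (q : ℝ) (b t r : ℕ) : ℝ := ∑ i ∈ Finset.Icc r b, Qfun q b t i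

lemma Pfun_eq_zero_of_lt {t r : ℕ} (h : b < r) : Pfun q b t r = 0 := by
  rw [Pfun, Finset.Icc_eq_empty (by omega), Finset.sum_empty]

lemma Qfun_eq_Pfun_sub (t r : ℕ) : Qfun q b t r = Pfun q b t r - Pfun q b t (r + 1) := by
  rcases le_or_gt r b with hr | hr
  · rw [Pfun, Pfun, ← Finset.add_sum_Ioc_eq_sum_Icc hr, Finset.Icc_add_one_left_eq_Ioc]
    ring
  · rw [Pfun_eq_zero_of_lt hr, Pfun_eq_zero_of_lt (by omega), Qfun_eq_zero (by omega)]
    ring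

lemma sum_Icc_Qfun_eq_Pfun (t r : ℕ) : ∑ i ∈ Finset.Icc r t, Qfun q b t i = Pfun q b t r := by
  have extend (n : ℕ) (hn : min t b ≤ n) (hn' : n ≤ max t b) :
      ∑ i ∈ Finset.Icc r n, Qfun q b t i = ∑ i ∈ Finset.Icc r (max t b), Qfun q b t i := by
    refine Finset.sum_subset (Finset.Icc_subset_Icc_right hn') fun i hi hni => ?_
    simp only [Finset.mem_Icc] at hi hni
    exact Qfun_eq_zero (by omega)
  rw [Pfun, extend t (by omega) (by omega), extend b (by omega) (by omega)]

lemma Pfun_succ (t r : ℕ) : Pfun q b (t + 1) r = Pfun q b t r + Qflux q b t r := by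
  rcases le_or_gt r b with hr | hr
  · have telescope := Finset.sum_Icc_sub hr (fun i : ℕ => Qflux q b t i)
    push_cast at telescope
    rw [Finset.sum_sub_distrib, Qflux_eq_zero_of_lt (by omega), zero_sub] at telescope
    rw [Pfun, Pfun, Finset.sum_congr rfl fun i hi => Qfun_succ_eq_add_Qflux t (Nat.cast_nonneg i)
      (by simp only [Finset.mem_Icc] at hi; omega), Finset.sum_sub_distrib, Finset.sum_add_distrib]
    linarith
  · rw [Pfun_eq_zero_of_lt hr, Pfun_eq_zero_of_lt hr, Qflux_eq_zero_of_lt (by omega), add_zero]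

lemma Pfun_succ_zero (t : ℕ) : Pfun q b (t + 1) 0 = Pfun q b t 0 := by
  rw [Pfun_succ, Nat.cast_zero, Qflux_zero, add_zero]

lemma Pfun_succ_succ (t r : ℕ) :
    Pfun q b (t + 1) (r + 1) = Pfun q b t r * Ufun q b r
      + Pfun q b t (r + 1) * (1 - Ufun q b r - Dfun q b (r + 1))
      + Pfun q b t (r + 2) * Dfun q b (r + 1) := by
  have hr := Qfun_eq_Pfun_sub (q := q) (b := b) t r
  have hr1 := Qfun_eq_Pfun_sub (q := q) (b := b) t (r + 1)
  rw [Pfun_succ, Qflux]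
  push_cast at hr1 ⊢
  rw [add_sub_cancel_right, hr, hr1]
  ring

lemma Pfun_le_Pfun_succ (hq : 1 ≤ q) (t r : ℕ) : Pfun q b t r ≤ Pfun q b (t + 1) r := by
  induction t generalizing r with
  | zero =>
    cases r with
    | zero => rw [Pfun_succ_zero]
    | succ r =>
      have hP0 : Pfun q b 0 (r + 1) = 0 :=
        Finset.sum_eq_zero fun i hi => Qfun_eq_zero (by simp only [Finset.mem_Icc] at hi; omega)
      rw [hP0]
      exact Finset.sum_nonneg fun i _ => Qfun_nonneg hq 1 i
  | succ t ih =>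
    cases r with
    | zero => rw [Pfun_succ_zero, Pfun_succ_zero]; exact ih 0
    | succ r =>
      rcases lt_or_ge b (r + 1) with hb | hb
      · rw [Pfun_eq_zero_of_lt hb, Pfun_eq_zero_of_lt hb]
      have hstay : 0 ≤ 1 - Ufun q b r - Dfun q b (r + 1) := by
        linarith [Ufun_add_Dfun_add_one_le_one hq (b := b) (r := r) (by omega)]
      have hup := Ufun_nonneg (q := q) (b := b) r
      have hdown := Dfun_nonneg hq (b := b) (show (0 : ℤ) ≤ r + 1 by omega)
      rw [Pfun_succ_succ, Pfun_succ_succ]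
      gcongr
      exacts [ih r, ih (r + 1), ih (r + 2)]

lemma Pfun_monotone (hq : 1 ≤ q) (r : ℕ) : Monotone fun t => Pfun q b t r :=
  monotone_nat_of_le_succ fun t => Pfun_le_Pfun_succ hq t r

end RankDistribution

theorem stmt11_general (q : ℝ) (hq : 2 ≤ q) (b r : ℕ) :
    ∀ t : ℕ, r ≤ t →
      ∑ i ∈ Finset.Icc r r, Qfun q b r (i : ℤ) ≤ ∑ i ∈ Finset.Icc r t, Qfun q b t (i : ℤ) := by
  intro t hrt
  rw [sum_Icc_Qfun_eq_Pfun, sum_Icc_Qfun_eq_Pfun]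
  exact Pfun_monotone (by linarith) r hrt

/-- With `P_t(r) = Σ_{i=r}^t Q_{q,b,i}(t)` the probability that a sum of `t` random outer
products has rank at least `r`: `P_t(r) ≥ P_r(r)` for all `t ≥ r`. -/
theorem stmt11 (q : ℝ) (hq : 2 ≤ q) (b r : ℕ) (hr : 1 ≤ r) (hrb : r ≤ b) :
    ∀ t : ℕ, r ≤ t →
      ∑ i ∈ Finset.Icc r r, Qfun q b r (i : ℤ) ≤ ∑ i ∈ Finset.Icc r t, Qfun q b t (i : ℤ) :=
  stmt11_general q hq b r
end

section
/- Let u_1,...,u_t, v_1,...,v_t be independent uniformly random vectors in F_q^b and let A = Σ_{i=1}^t u_i v_i^T. Conditioned on rank(A) = r with r < b, the probability that rank(A + u v^T) = r + 1 for fresh uniform u, v ∈ F_q^b is U_r = (1 − q^{−(b−r)})^2, and the probability that rank(A + u v^T) = r − 1 is D_r = q^{r−1}(q^r − 1)/q^{2b}. -/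
/-!
Write the update as `g = f + φ ⊗ w` with `f : V → W` linear, `φ` a functional and `w` a vector.
If `w ∉ range f`, then `ker g = ker f ∩ ker φ`. If `w = f x₀`, then `g = f ∘ (1 + φ ⊗ x₀)`; the
second factor is invertible unless `φ x₀ = -1`, and then its range is `ker φ`. So the rank rises
exactly when `w ∉ range f` and `φ` does not vanish on `ker f`, and drops exactly when `w = f x₀`
with `φ x₀ = -1` and `φ` lies in the annihilator of `ker f`, a space of dimension `r`. The rising
pairs therefore form a product of complements of two `r`-dimensional subspaces, and in the dropping
ones each nonzero `w ∈ range f` is paired with the `q ^ (r - 1)` functionals of that annihilator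
taking the value `-1` at `x₀`.
-/

open Module Submodule LinearMap

namespace Submodule

variable {K V W : Type*} [Field K] [AddCommGroup V] [Module K V] [FiniteDimensional K V]
  [AddCommGroup W] [Module K W]

theorem finrank_map_add_finrank_inf_ker (f : V →ₗ[K] W) (U : Submodule K V) :
    finrank K (U.map f) + finrank K ↥(U ⊓ ker f) = finrank K U := by
  have h := finrank_range_add_finrank_ker (f.domRestrict U)
  rwa [range_domRestrict, ker_domRestrict, ← finrank_map_subtype_eq, map_comap_subtype] at h

theorem finrank_inf_ker_add_one {U : Submodule K V} {φ : Dual K V} (h : ¬U ≤ ker φ) :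
    finrank K ↥(U ⊓ ker φ) + 1 = finrank K U := by
  have hmap : U.map φ = ⊤ :=
    (Ideal.eq_bot_or_top _).resolve_left fun h' => h (map_le_iff_le_comap.mp (le_bot_iff.mpr h'))
  rw [← finrank_map_add_finrank_inf_ker φ U, hmap, finrank_top, finrank_self, add_comm]

theorem finrank_le_finrank_inf_ker_add_one (U : Submodule K V) (φ : Dual K V) :
    finrank K U ≤ finrank K ↥(U ⊓ ker φ) + 1 := by
  by_cases h : U ≤ ker φ
  · rw [inf_eq_left.mpr h]
    omega
  · exact (finrank_inf_ker_add_one h).ge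

end Submodule

namespace LinearMap

variable {K V W : Type*} [Field K] [AddCommGroup V] [Module K V] [AddCommGroup W] [Module K W]
  (f : V →ₗ[K] W) (φ : Dual K V)

theorem le_ker_iff_mem_dualAnnihilator : ker f ≤ ker φ ↔ φ ∈ (ker f).dualAnnihilator := by
  rw [mem_dualAnnihilator]
  rfl

variable {f φ} in
theorem apply_eq_apply_of_le_ker (h : ker f ≤ ker φ) {x y : V} (hxy : f x = f y) : φ x = φ y :=
  sub_eq_zero.mp (by rw [← map_sub]; exact h (by rw [mem_ker, map_sub, hxy, sub_self]))

theorem ker_add_smulRight_of_notMem_range {w : W} (hw : w ∉ range f) :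
    ker (f + φ.smulRight w) = ker f ⊓ ker φ := by
  ext x
  simp only [mem_ker, mem_inf, add_apply, smulRight_apply]
  refine ⟨fun hx => ?_, fun ⟨hfx, hφx⟩ => by simp [hfx, hφx]⟩
  have hφx : φ x = 0 := by
    by_contra hne
    exact hw ⟨-(φ x)⁻¹ • x, by simp [eq_neg_of_add_eq_zero_left hx, smul_smul, hne]⟩
  simp_all

theorem add_smulRight_apply_eq_comp (x₀ : V) :
    f + φ.smulRight (f x₀) = f ∘ₗ (LinearMap.id + φ.smulRight x₀) := by
  ext x
  simp

theorem range_id_add_smulRight_of_eq_neg_one {x₀ : V} (h : φ x₀ = -1) :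
    range (LinearMap.id + φ.smulRight x₀) = ker φ := by
  ext z
  constructor
  · rintro ⟨x, rfl⟩
    simp [h]
  · intro hz
    exact ⟨z, by simp_all⟩

variable [FiniteDimensional K V]

theorem range_id_add_smulRight_eq_top {x₀ : V} (h : φ x₀ ≠ -1) :
    range (LinearMap.id + φ.smulRight x₀) = ⊤ := by
  refine range_eq_top.mpr (injective_iff_surjective.mp
    ((injective_iff_map_eq_zero _).mpr fun x hx => ?_))
  simp only [add_apply, id_apply, smulRight_apply] at hx
  have hφx : φ x * (1 + φ x₀) = 0 := by
    have := congrArg φ hx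
    simp only [map_add, map_smul, smul_eq_mul, map_zero] at this
    linear_combination this
  have : φ x = 0 := (mul_eq_zero.mp hφx).resolve_right fun h' => h (by linear_combination h')
  simpa [this] using hx

theorem finrank_range_add_smulRight_of_notMem_range {w : W} (hw : w ∉ range f) :
    finrank K (range (f + φ.smulRight w)) + finrank K ↥(ker f ⊓ ker φ) = finrank K V := by
  rw [← ker_add_smulRight_of_notMem_range f φ hw]
  exact finrank_range_add_finrank_ker _

theorem range_add_smulRight_apply_of_ne_neg_one {x₀ : V} (h : φ x₀ ≠ -1) :
    range (f + φ.smulRight (f x₀)) = range f := by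
  rw [add_smulRight_apply_eq_comp,
    range_comp_of_range_eq_top _ (range_id_add_smulRight_eq_top φ h)]

theorem finrank_range_add_smulRight_apply_of_eq_neg_one {x₀ : V} (h : φ x₀ = -1) :
    finrank K (range (f + φ.smulRight (f x₀))) + 1 + finrank K ↥(ker f ⊓ ker φ) =
      finrank K V := by
  have hker := Dual.finrank_ker_add_one_of_ne_zero (f := φ) fun h0 => by simp [h0] at h
  have hmap := finrank_map_add_finrank_inf_ker f (ker φ)
  rw [add_smulRight_apply_eq_comp, range_comp, range_id_add_smulRight_of_eq_neg_one φ h, inf_comm]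
  omega

theorem finrank_range_add_smulRight_eq_add_one_iff (w : W) :
    finrank K (range (f + φ.smulRight w)) = finrank K (range f) + 1 ↔
      w ∉ range f ∧ ¬ker f ≤ ker φ := by
  have hf := finrank_range_add_finrank_ker f
  have hle : finrank K ↥(ker f ⊓ ker φ) ≤ finrank K (ker f) := finrank_mono inf_le_left
  by_cases hw : w ∈ range f
  · have := finrank_le_finrank_inf_ker_add_one (ker f) φ
    refine iff_of_false ?_ fun h => h.1 hw
    obtain ⟨x₀, rfl⟩ := hw
    by_cases hx₀ : φ x₀ = -1
    · have := finrank_range_add_smulRight_apply_of_eq_neg_one f φ hx₀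
      omega
    · rw [range_add_smulRight_apply_of_ne_neg_one f φ hx₀]
      omega
  · have hg := finrank_range_add_smulRight_of_notMem_range f φ hw
    by_cases h : ker f ≤ ker φ
    · rw [inf_eq_left.mpr h] at hg
      exact iff_of_false (by omega) fun h' => h'.2 h
    · have := finrank_inf_ker_add_one h
      exact iff_of_true (by omega) ⟨hw, h⟩

theorem finrank_range_add_smulRight_add_one_eq_iff (w : W) :
    finrank K (range (f + φ.smulRight w)) + 1 = finrank K (range f) ↔
      (∃ x, f x = w ∧ φ x = -1) ∧ ker f ≤ ker φ := by
  have hf := finrank_range_add_finrank_ker f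
  have hle : finrank K ↥(ker f ⊓ ker φ) ≤ finrank K (ker f) := finrank_mono inf_le_left
  by_cases hw : w ∈ range f
  · obtain ⟨x₀, rfl⟩ := hw
    by_cases hx₀ : φ x₀ = -1
    · have hg := finrank_range_add_smulRight_apply_of_eq_neg_one f φ hx₀
      by_cases h : ker f ≤ ker φ
      · rw [inf_eq_left.mpr h] at hg
        exact iff_of_true (by omega) ⟨⟨x₀, rfl, hx₀⟩, h⟩
      · have := finrank_inf_ker_add_one h
        exact iff_of_false (by omega) fun h' => h h'.2
    · rw [range_add_smulRight_apply_of_ne_neg_one f φ hx₀]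
      refine iff_of_false (by omega) ?_
      rintro ⟨⟨x, hx, hφx⟩, h⟩
      exact hx₀ ((apply_eq_apply_of_le_ker h hx).symm.trans hφx)
  · have := finrank_range_add_smulRight_of_notMem_range f φ hw
    exact iff_of_false (by omega) fun ⟨⟨x, hx, _⟩, _⟩ => hw ⟨x, hx⟩

end LinearMap

section Fibers

variable {K V W : Type*} [Field K] [AddCommGroup V] [Module K V] [FiniteDimensional K V]
  [AddCommGroup W] [Module K W]

theorem Module.Dual.card_apply_eq {ψ : Dual K V} (hψ : ψ ≠ 0) (a : K) :
    Nat.card {x : V // ψ x = a} = Nat.card K ^ (finrank K V - 1) := by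
  obtain ⟨x₁, rfl⟩ := LinearMap.surjective hψ a
  refine (Nat.card_congr (ψ.toAddMonoidHom.fiberEquivKer x₁)).trans ?_
  have := finrank_ker_add_one_of_ne_zero hψ
  rw [show Nat.card ψ.toAddMonoidHom.ker = Nat.card (ker ψ) from rfl,
    Module.natCard_eq_pow_finrank (K := K)]
  congr 1
  omega

theorem LinearMap.card_dual_exists_apply_eq_neg_one_and_le_ker (f : V →ₗ[K] W) {x₀ : V}
    (hx₀ : f x₀ ≠ 0) :
    Nat.card {φ : Dual K V // (∃ x, f x = f x₀ ∧ φ x = -1) ∧ ker f ≤ ker φ} =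
      Nat.card K ^ (finrank K (range f) - 1) := by
  set Ann := (ker f).dualAnnihilator with hAnn
  let ψ : Dual K Ann := (Dual.eval K V x₀).domRestrict Ann
  have hψ : ψ ≠ 0 := fun h0 => hx₀ <| mem_ker.mp <|
    (Subspace.forall_mem_dualAnnihilator_apply_eq_zero_iff _ _).mp fun φ hφ =>
      LinearMap.congr_fun h0 ⟨φ, hφ⟩
  have hiff (φ : Dual K V) :
      ((∃ x, f x = f x₀ ∧ φ x = -1) ∧ ker f ≤ ker φ) ↔ φ ∈ Ann ∧ φ x₀ = -1 := by
    constructor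
    · rintro ⟨⟨x, hx, hφx⟩, h⟩
      exact ⟨(le_ker_iff_mem_dualAnnihilator f φ).mp h,
        (apply_eq_apply_of_le_ker h hx).symm.trans hφx⟩
    · rintro ⟨h, hφx₀⟩
      exact ⟨⟨x₀, rfl, hφx₀⟩, (le_ker_iff_mem_dualAnnihilator f φ).mpr h⟩
  calc _ = Nat.card {c : Ann // ψ c = -1} :=
        Nat.card_congr <| (Equiv.subtypeEquivRight hiff).trans
          (Equiv.subtypeSubtypeEquivSubtypeInter (· ∈ Ann) fun φ : Dual K V => φ x₀ = -1).symm
    _ = _ := by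
      rw [Dual.card_apply_eq (V := Ann) (ψ := ψ) hψ, hAnn,
        ← range_dualMap_eq_dualAnnihilator_ker, finrank_range_dualMap_eq_finrank_range]

end Fibers

section Counting

variable {K V W : Type*} [Field K] [Finite K] [AddCommGroup V] [Module K V]
  [FiniteDimensional K V] [AddCommGroup W] [Module K W]

theorem Submodule.card_notMem (U : Submodule K V) :
    Nat.card {x : V // x ∉ U} = Nat.card K ^ finrank K V - Nat.card K ^ finrank K U := by
  have := Module.finite_of_finite K (M := V)
  have := Fintype.ofFinite V
  classical
  rw [Nat.card_eq_fintype_card, Fintype.card_subtype_compl, ← Nat.card_eq_fintype_card,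
    ← Nat.card_eq_fintype_card, ← Module.natCard_eq_pow_finrank, ← Module.natCard_eq_pow_finrank]

theorem Submodule.card_mem_ne_zero (U : Submodule K V) :
    Nat.card {x : V // x ∈ U ∧ x ≠ 0} = Nat.card K ^ finrank K U - 1 := by
  let e : {x : V // x ∈ U ∧ x ≠ 0} ≃ {c : U // c ∉ (⊥ : Submodule K U)} :=
    (Equiv.subtypeSubtypeEquivSubtypeInter (· ∈ U) (· ≠ 0)).symm.trans
      (Equiv.subtypeEquivRight fun c => by simp)
  rw [Nat.card_congr e, card_notMem, finrank_bot, pow_zero]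

namespace LinearMap

variable [FiniteDimensional K W] (f : V →ₗ[K] W)

theorem card_finrank_range_add_smulRight_eq_add_one :
    Nat.card {p : W × Dual K V //
        finrank K (range (f + p.2.smulRight p.1)) = finrank K (range f) + 1} =
      (Nat.card K ^ finrank K W - Nat.card K ^ finrank K (range f)) *
        (Nat.card K ^ finrank K V - Nat.card K ^ finrank K (range f)) := by
  let e := Equiv.subtypeEquivRight fun p : W × Dual K V =>
    (finrank_range_add_smulRight_eq_add_one_iff f p.2 p.1).trans
      (and_congr_right' (not_congr (le_ker_iff_mem_dualAnnihilator f p.2)))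
  rw [Nat.card_congr (e.trans (Equiv.subtypeProdEquivProd (p := (· ∉ range f))
    (q := (· ∉ (ker f).dualAnnihilator)))), Nat.card_prod, card_notMem, card_notMem,
    Subspace.dual_finrank_eq, ← range_dualMap_eq_dualAnnihilator_ker,
    finrank_range_dualMap_eq_finrank_range]

theorem card_finrank_range_add_smulRight_add_one_eq :
    Nat.card {p : W × Dual K V //
        finrank K (range (f + p.2.smulRight p.1)) + 1 = finrank K (range f)} =
      (Nat.card K ^ finrank K (range f) - 1) * Nat.card K ^ (finrank K (range f) - 1) := by
  have := Module.finite_of_finite K (M := Dual K V)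
  have := Module.finite_of_finite K (M := W)
  have := Fintype.ofFinite W
  classical
  have hfiber (w : W) :
      Nat.card {φ : Dual K V // (∃ x, f x = w ∧ φ x = -1) ∧ ker f ≤ ker φ} =
        if w ∈ range f ∧ w ≠ 0 then Nat.card K ^ (finrank K (range f) - 1) else 0 := by
    split_ifs with hw
    · obtain ⟨⟨x₀, rfl⟩, hx₀⟩ := hw
      exact card_dual_exists_apply_eq_neg_one_and_le_ker f hx₀
    · refine Nat.card_eq_zero.mpr (Or.inl ⟨fun ⟨φ, ⟨x, hx, hφx⟩, h⟩ => hw ⟨⟨x, hx⟩, ?_⟩⟩)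
      rintro rfl
      simp [mem_ker.mp (h hx)] at hφx
  let e := (Equiv.subtypeEquivRight fun p : W × Dual K V =>
    finrank_range_add_smulRight_add_one_eq_iff f p.2 p.1).trans
      (Equiv.subtypeProdEquivSigmaSubtype fun w (φ : Dual K V) =>
        (∃ x, f x = w ∧ φ x = -1) ∧ ker f ≤ ker φ)
  rw [Nat.card_congr e, Nat.card_sigma]
  simp only [hfiber, Finset.sum_ite, Finset.sum_const_zero, add_zero, Finset.sum_const,
    smul_eq_mul]
  rw [← Fintype.card_subtype, ← Nat.card_eq_fintype_card, card_mem_ne_zero]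

end LinearMap

end Counting

namespace Matrix

variable {K m n : Type*} [Field K] [Fintype n] [DecidableEq n]

theorem mulVecLin_add_vecMulVec (A : Matrix m n K) (u : m → K) (v : n → K) :
    (A + vecMulVec u v).mulVecLin = A.mulVecLin + (dotProductEquiv K n v).smulRight u := by
  ext x
  simp [vecMulVec_apply, mul_comm]

theorem card_rank_add_vecMulVec (A : Matrix m n K) (P : ℕ → Prop) :
    Nat.card {p : (m → K) × (n → K) // P (A + vecMulVec p.1 p.2).rank} =
      Nat.card {p : (m → K) × Dual K (n → K) //
        P (finrank K (range (A.mulVecLin + p.2.smulRight p.1)))} :=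
  Nat.card_congr <| (Equiv.prodCongr (Equiv.refl _) (dotProductEquiv K n).toEquiv).subtypeEquiv
    fun p => by rw [rank, mulVecLin_add_vecMulVec]; rfl

variable [Finite K] [Fintype m] (A : Matrix m n K)

theorem card_rank_add_vecMulVec_eq_add_one :
    Nat.card {p : (m → K) × (n → K) // (A + vecMulVec p.1 p.2).rank = A.rank + 1} =
      (Nat.card K ^ Fintype.card m - Nat.card K ^ A.rank) *
        (Nat.card K ^ Fintype.card n - Nat.card K ^ A.rank) := by
  rw [A.card_rank_add_vecMulVec (· = A.rank + 1), ← finrank_fintype_fun_eq_card (R := K) (η := m),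
    ← finrank_fintype_fun_eq_card (R := K) (η := n), rank]
  exact A.mulVecLin.card_finrank_range_add_smulRight_eq_add_one

theorem card_rank_add_vecMulVec_add_one_eq :
    Nat.card {p : (m → K) × (n → K) // (A + vecMulVec p.1 p.2).rank + 1 = A.rank} =
      (Nat.card K ^ A.rank - 1) * Nat.card K ^ (A.rank - 1) := by
  rw [A.card_rank_add_vecMulVec (· + 1 = A.rank), rank]
  exact A.mulVecLin.card_finrank_range_add_smulRight_add_one_eq

end Matrix

theorem stmt12_general {F : Type*} [Field F] [Fintype F] (b : ℕ)
    (A : Matrix (Fin b) (Fin b) F) (r : ℕ) (hrank : A.rank = r) :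
    ((Nat.card {p : (Fin b → F) × (Fin b → F) //
          ((A + Matrix.vecMulVec p.1 p.2).rank : ℤ) = (r : ℤ) + 1} : ℝ)
        / (Fintype.card F : ℝ) ^ (2 * b)
      = (1 - (Fintype.card F : ℝ) ^ ((r : ℤ) - (b : ℤ))) ^ 2)
    ∧ ((Nat.card {p : (Fin b → F) × (Fin b → F) //
          ((A + Matrix.vecMulVec p.1 p.2).rank : ℤ) = (r : ℤ) - 1} : ℝ)
        / (Fintype.card F : ℝ) ^ (2 * b)
      = (Fintype.card F : ℝ) ^ ((r : ℤ) - 1) * ((Fintype.card F : ℝ) ^ (r : ℤ) - 1)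
          / (Fintype.card F : ℝ) ^ (2 * b)) := by
  subst hrank
  simp_rw [eq_sub_iff_add_eq, ← Nat.cast_add_one, Nat.cast_inj]
  rw [A.card_rank_add_vecMulVec_eq_add_one, A.card_rank_add_vecMulVec_add_one_eq,
    Nat.card_eq_fintype_card, Fintype.card_fin]
  have hq : (0 : ℝ) < Fintype.card F := by exact_mod_cast Fintype.card_pos
  have hle : Fintype.card F ^ A.rank ≤ Fintype.card F ^ b :=
    Nat.pow_le_pow_right Fintype.card_pos A.rank_le_width
  constructor
  · push_cast [Nat.cast_sub hle]
    rw [zpow_sub₀ hq.ne', zpow_natCast, zpow_natCast]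
    field_simp
    ring
  · congr 1
    rcases Nat.eq_zero_or_pos A.rank with h0 | hpos
    · simp [h0]
    · rw [← Nat.cast_pred hpos, zpow_natCast, zpow_natCast,
        Nat.cast_mul, Nat.cast_sub (Nat.one_le_pow _ _ Fintype.card_pos)]
      push_cast
      ring

/-- For a fixed `b×b` matrix `A` of rank `r < b` over `F_q` and independent uniform
`u, v ∈ F_q^b`: `P(rank(A + uvᵀ) = r+1) = (1 − q^{r−b})²` and
`P(rank(A + uvᵀ) = r−1) = q^{r−1}(q^r − 1)/q^{2b}`. -/
theorem stmt12 {F : Type*} [Field F] [Fintype F] [DecidableEq F] (b : ℕ) (hb : 1 ≤ b)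
    (A : Matrix (Fin b) (Fin b) F) (r : ℕ) (hrank : A.rank = r) (hrb : r < b) :
    ((Nat.card {p : (Fin b → F) × (Fin b → F) //
          ((A + Matrix.vecMulVec p.1 p.2).rank : ℤ) = (r : ℤ) + 1} : ℝ)
        / (Fintype.card F : ℝ) ^ (2 * b)
      = (1 - (Fintype.card F : ℝ) ^ ((r : ℤ) - (b : ℤ))) ^ 2)
    ∧ ((Nat.card {p : (Fin b → F) × (Fin b → F) //
          ((A + Matrix.vecMulVec p.1 p.2).rank : ℤ) = (r : ℤ) - 1} : ℝ)
        / (Fintype.card F : ℝ) ^ (2 * b)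
      = (Fintype.card F : ℝ) ^ ((r : ℤ) - 1) * ((Fintype.card F : ℝ) ^ (r : ℤ) - 1)
          / (Fintype.card F : ℝ) ^ (2 * b)) :=
  stmt12_general b A r hrank
end

section
/- For any real q ≥ 2 and integers b > r > 0, the infinite product Π_{d=1}^∞ (1 − q^{−d(b−r+1)})^{2 r q^d} is strictly greater than 1 − 2r/(q^{b−r} − 1). -/
/-! Bernoulli's inequality bounds the `d`-th factor below by `1 - 2r/c^(d+1)` with `c = q^(b-r)`,
strictly since the exponent exceeds 1, and the Weierstrass product inequality
`∏ fᵢ ≥ 1 - ∑ (1 - fᵢ)` for factors in `[0, 1]` turns this into a comparison with the geometric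
series `∑ 2r/c^(d+1) = 2r/(c - 1)`. -/

theorem Finset.one_sub_sum_one_sub_le_prod {ι R : Type*} [CommRing R] [LinearOrder R]
    [IsStrictOrderedRing R] (s : Finset ι) {f : ι → R} (h0 : ∀ i ∈ s, 0 ≤ f i)
    (h1 : ∀ i ∈ s, f i ≤ 1) : 1 - ∑ i ∈ s, (1 - f i) ≤ ∏ i ∈ s, f i := by
  classical
  induction s using Finset.induction_on with
  | empty => simp
  | insert x s hx ih =>
    rw [sum_insert hx, prod_insert hx]
    have hx0 := h0 x (mem_insert_self x s)
    have hx1 := h1 x (mem_insert_self x s)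
    have hP1 : ∏ i ∈ s, f i ≤ 1 :=
      prod_le_one (fun i hi ↦ h0 i (mem_insert_of_mem hi)) fun i hi ↦ h1 i (mem_insert_of_mem hi)
    have hP := ih (fun i hi ↦ h0 i (mem_insert_of_mem hi)) fun i hi ↦ h1 i (mem_insert_of_mem hi)
    nlinarith [mul_le_mul_of_nonneg_left (sub_nonneg.2 hP1) hx0]

theorem Real.one_sub_tsum_one_sub_le_tprod {ι : Type*} {f : ι → ℝ} (h0 : ∀ i, 0 ≤ f i)
    (h1 : ∀ i, f i ≤ 1) (hs : Summable fun i ↦ 1 - f i) :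
    1 - ∑' i, (1 - f i) ≤ ∏' i, f i := by
  have hf : Multipliable f := by
    simpa using Real.multipliable_one_add_of_summable hs.neg
  refine ge_of_tendsto' hf.hasProd fun s ↦ ?_
  calc 1 - ∑' i, (1 - f i) ≤ 1 - ∑ i ∈ s, (1 - f i) :=
        sub_le_sub_left (hs.sum_le_tsum s fun i _ ↦ sub_nonneg.2 (h1 i)) 1
    _ ≤ ∏ i ∈ s, f i := s.one_sub_sum_one_sub_le_prod (fun i _ ↦ h0 i) fun i _ ↦ h1 i

theorem hasSum_div_pow_succ {c : ℝ} (hc : 1 < c) (a : ℝ) :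
    HasSum (fun n : ℕ ↦ a / c ^ (n + 1)) (a / (c - 1)) := by
  have hc0 : 0 < c := by linarith
  have h := (hasSum_geometric_of_lt_one (inv_nonneg.2 hc0.le) (inv_lt_one_of_one_lt₀ hc)).mul_left
    (a / c)
  have hterm : (fun n ↦ a / c * c⁻¹ ^ n) = fun n : ℕ ↦ a / c ^ (n + 1) := by
    ext n
    rw [pow_succ, inv_pow]
    field_simp
  rwa [hterm, show a / c * (1 - c⁻¹)⁻¹ = a / (c - 1) by field_simp] at h

theorem one_sub_div_pow_lt_rpow {q a : ℝ} (hq : 1 < q) (ha : 1 ≤ a) (m d : ℕ) :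
    1 - a / (q ^ m) ^ (d + 1) < (1 - 1 / q ^ ((d + 1) * (m + 1))) ^ (a * q ^ (d + 1)) := by
  have hq0 : 0 < q := by linarith
  have hx : 0 < 1 / q ^ ((d + 1) * (m + 1)) := by positivity
  have hp : 1 < a * q ^ (d + 1) :=
    (one_lt_pow₀ hq d.succ_ne_zero).trans_le (le_mul_of_one_le_left (by positivity) ha)
  have hx1 : 1 / q ^ ((d + 1) * (m + 1)) ≤ 1 := div_le_one_of_le₀ (one_le_pow₀ hq.le) (by positivity)
  have key : a * q ^ (d + 1) * (1 / q ^ ((d + 1) * (m + 1))) = a / (q ^ m) ^ (d + 1) := by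
    rw [show (d + 1) * (m + 1) = m * (d + 1) + (d + 1) by ring, pow_add q (m * (d + 1)), pow_mul q]
    field_simp
  have := one_add_mul_self_lt_rpow_one_add (s := -(1 / q ^ ((d + 1) * (m + 1)))) (by linarith)
    (neg_ne_zero.2 hx.ne') hp
  rwa [mul_neg, key, ← sub_eq_add_neg, ← sub_eq_add_neg] at this

theorem stmt13_general (q : ℝ) (hq : 2 ≤ q) (r b : ℕ) (hr : 0 < r) (hrb : r < b) :
    1 - 2 * (r : ℝ) / (q ^ (b - r) - 1)
      < ∏' d : ℕ, (1 - 1 / q ^ ((d + 1) * (b - r + 1))) ^ ((2 * (r : ℝ)) * q ^ (d + 1)) := by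
  set f : ℕ → ℝ := fun d ↦ (1 - 1 / q ^ ((d + 1) * (b - r + 1))) ^ ((2 * (r : ℝ)) * q ^ (d + 1))
  have hq1 : 1 < q := by linarith
  have hbase : ∀ d : ℕ, 0 ≤ 1 - 1 / q ^ ((d + 1) * (b - r + 1)) ∧
      1 - 1 / q ^ ((d + 1) * (b - r + 1)) ≤ 1 := fun d ↦
    ⟨sub_nonneg.2 (div_le_one_of_le₀ (one_le_pow₀ hq1.le) (by positivity)),
      sub_le_self _ (by positivity)⟩
  have hf0 : ∀ d, 0 ≤ f d := fun d ↦ Real.rpow_nonneg (hbase d).1 _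
  have hf1 : ∀ d, f d ≤ 1 := fun d ↦ Real.rpow_le_one (hbase d).1 (hbase d).2 (by positivity)
  have hlt : ∀ d, 1 - f d < 2 * r / (q ^ (b - r)) ^ (d + 1) := fun d ↦ by
    have := one_sub_div_pow_lt_rpow hq1 (by norm_cast; omega : (1 : ℝ) ≤ 2 * r) (b - r) d
    simp only [f]
    linarith
  have hsum := hasSum_div_pow_succ (one_lt_pow₀ hq1 (by omega : b - r ≠ 0)) (2 * r)
  calc 1 - 2 * (r : ℝ) / (q ^ (b - r) - 1) < 1 - ∑' d, (1 - f d) := by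
        rw [← hsum.tsum_eq]
        exact sub_lt_sub_left (hsum.summable.tsum_lt_tsum_of_nonneg
          (fun d ↦ sub_nonneg.2 (hf1 d)) (fun d ↦ (hlt d).le) (hlt 0)) 1
    _ ≤ ∏' d, f d := Real.one_sub_tsum_one_sub_le_tprod hf0 hf1
        (hsum.summable.of_nonneg_of_le (fun d ↦ sub_nonneg.2 (hf1 d)) fun d ↦ (hlt d).le)

/-- For real `q ≥ 2` and integers `b > r > 0`,
`Π_{d=1}^∞ (1 − q^{−d(b−r+1)})^{2 r q^d} > 1 − 2r/(q^{b−r} − 1)`. -/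
theorem stmt13 (q : ℝ) (hq : 2 ≤ q) (r b : ℕ) (hr : 0 < r) (hrb : r < b)
    (h : 2 * (r : ℝ) / (q ^ (b - r) - 1) < 1) :
    1 - 2 * (r : ℝ) / (q ^ (b - r) - 1)
      < ∏' d : ℕ, (1 - 1 / q ^ ((d + 1) * (b - r + 1))) ^ ((2 * (r : ℝ)) * q ^ (d + 1)) :=
  stmt13_general q hq r b hr hrb
end

section
/- Let S be a b×b matrix sequence over F annihilated by f ∈ F[x] (monic of degree d), and let φ_f : sequences annihilated by f → (F[x]/(f))^{b×b} be applied entrywise, where the scalar φ_f(T) = P·(T_0,...,T_{d−1})^T with P the Taussky intertwiner. Then for any G ∈ F[x]^{b×b}, φ_f(SG) = φ_f(S)·G (the product taken in (F[x]/(f))^{b×b}); consequently G generates S (i.e., SG = 0 and det G ≠ 0) if and only if φ_f(S)·G = 0 over F[x]/(f) and det G ≠ 0. -/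
open Polynomial Matrix

/-- The `i`-th coefficient matrix of a matrix of polynomials. -/
def matCoeff {F : Type*} [Field F] {b : ℕ} (G : Matrix (Fin b) (Fin b) F[X]) (i : ℕ) :
    Matrix (Fin b) (Fin b) F :=
  G.map fun p => p.coeff i

/-- The degree of a matrix of polynomials. -/
def matDeg {F : Type*} [Field F] {b : ℕ} (G : Matrix (Fin b) (Fin b) F[X]) : ℕ :=
  Finset.univ.sup fun ij : Fin b × Fin b => (G ij.1 ij.2).natDegree

/-- `G` generates the matrix sequence `S`. -/
def SeqGen {F : Type*} [Field F] {b : ℕ} (S : ℕ → Matrix (Fin b) (Fin b) F)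
    (G : Matrix (Fin b) (Fin b) F[X]) : Prop :=
  G.det ≠ 0 ∧ ∀ k : ℕ, ∑ i ∈ Finset.range (matDeg G + 1), S (k + i) * matCoeff G i = 0

/-- `φ_f` applied entrywise to a `b×b` matrix sequence annihilated by `f`: the entry `(i,j)`
is (the polynomial representative of) `P·ω_f(S_{·,ij})`. -/
noncomputable def phiMat {F : Type*} [Field F] {b : ℕ} (d : ℕ)
    (P : Matrix (Fin d) (Fin d) F) (S : ℕ → Matrix (Fin b) (Fin b) F) :
    Matrix (Fin b) (Fin b) F[X] :=
  Matrix.of fun i j => vecToPoly (P *ᵥ fun l : Fin d => S (l : ℕ) i j)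

/-!
Entry by entry, `φ_f(SG)` is a sum of `φ_f` of scalar sequences `Σ_m g_m T(· + m)` with `T`
annihilated by `f`. On such `T` the shift acts on the window `(T_0, …, T_{d-1})` as the transposed
companion matrix `Cᵀ`, the intertwining relation `P Cᵀ = C P` moves it past `P`, and `C` acts on
coefficient vectors in the basis `1, x, …, x^{d-1}` of `F[x]/(f)` as multiplication by `x`. Hence
`φ_f` turns the shift into multiplication by `x`, and by linearity `φ_f(Σ_m g_m T(· + m)) = g φ_f(T)`.
For the equivalence, `φ_f` is injective on sequences annihilated by `f`: the powers of the root are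
linearly independent, `P` is invertible, and the recurrence determines a sequence from its first
`d` terms.
-/

section

open AdjoinRoot

variable {F : Type*} [Field F]

lemma sum_companionMat_smul_root_pow {f : F[X]} (hf : f.Monic) {d : ℕ} (hd : f.natDegree = d)
    (j : Fin d) : ∑ i, companionMat f d i j • root f ^ (i : ℕ) = root f ^ ((j : ℕ) + 1) := by
  by_cases hj : (j : ℕ) + 1 = d
  · have h : aeval (root f) f = 0 := by rw [aeval_eq, mk_self]
    rw [aeval_eq_sum_range, Finset.sum_range_succ, hf.coeff_natDegree, hd, one_smul] at h
    simp only [companionMat, hj, if_true, neg_smul, Finset.sum_neg_distrib,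
      Fin.sum_univ_eq_sum_range (fun i => f.coeff i • root f ^ i) d]
    linear_combination -h
  · have hj' : (j : ℕ) + 1 < d := by omega
    simp only [companionMat, hj, if_false]
    rw [Finset.sum_eq_single ⟨(j : ℕ) + 1, hj'⟩]
    · simp
    · intro i _ hi
      rw [if_neg (fun h => hi (Fin.ext h)), zero_smul]
    · simp

lemma sum_companionMat_mulVec_smul_root_pow {f : F[X]} (hf : f.Monic) {d : ℕ}
    (hd : f.natDegree = d) (v : Fin d → F) :
    ∑ i, (companionMat f d *ᵥ v) i • root f ^ (i : ℕ) = root f * ∑ i, v i • root f ^ (i : ℕ) := by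
  calc ∑ i, (companionMat f d *ᵥ v) i • root f ^ (i : ℕ)
      = ∑ j, v j • ∑ i, companionMat f d i j • root f ^ (i : ℕ) := by
        simp only [mulVec, dotProduct, Finset.sum_smul, Finset.smul_sum, smul_smul]
        rw [Finset.sum_comm]
        simp only [mul_comm]
    _ = root f * ∑ i, v i • root f ^ (i : ℕ) := by
        simp only [sum_companionMat_smul_root_pow hf hd, Finset.mul_sum, mul_smul_comm, pow_succ']

def annihilatedSeqs (f : F[X]) : Submodule F (ℕ → F) where
  carrier := {T | ∀ k, ∑ i ∈ Finset.range (f.natDegree + 1), f.coeff i * T (k + i) = 0}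
  add_mem' {T U} hT hU k := by
    simp only [Pi.add_apply, mul_add, Finset.sum_add_distrib, hT k, hU k, add_zero]
  zero_mem' k := by simp
  smul_mem' c T hT k := by
    simp only [Pi.smul_apply, smul_eq_mul, mul_left_comm _ c, ← Finset.mul_sum, hT k, mul_zero]

lemma shift_mem_annihilatedSeqs {f : F[X]} {T : ℕ → F} (hT : T ∈ annihilatedSeqs f) (m : ℕ) :
    (fun k => T (k + m)) ∈ annihilatedSeqs f := fun k => by
  simpa only [add_right_comm] using hT (k + m)

lemma eq_zero_of_mem_annihilatedSeqs {f : F[X]} (hf : f.Monic) {T : ℕ → F}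
    (hT : T ∈ annihilatedSeqs f) (h0 : ∀ l < f.natDegree, T l = 0) : T = 0 := by
  suffices ∀ k, T k = 0 from funext this
  intro k
  induction k using Nat.strong_induction_on with
  | _ k ih =>
    by_cases hk : k < f.natDegree
    · exact h0 k hk
    · have h := hT (k - f.natDegree)
      rw [Finset.sum_range_succ, hf.coeff_natDegree, one_mul, Nat.sub_add_cancel (by omega),
        Finset.sum_eq_zero fun i hi => by rw [ih _ (by simp at hi; omega), mul_zero]] at h
      simpa using h

lemma window_succ_eq_companionMat_transpose_mulVec {f : F[X]} (hf : f.Monic) {d : ℕ}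
    (hd : f.natDegree = d) {T : ℕ → F} (hT : T ∈ annihilatedSeqs f) :
    (fun l : Fin d => T (l + 1)) = (companionMat f d)ᵀ *ᵥ fun l => T l := by
  funext i
  simp only [mulVec, dotProduct, transpose_apply, companionMat]
  by_cases hi : (i : ℕ) + 1 = d
  · have h := hT 0
    rw [Finset.sum_range_succ, hf.coeff_natDegree, hd, ← Fin.sum_univ_eq_sum_range
      (fun l => f.coeff l * T (0 + l))] at h
    simp only [hi, if_true, neg_mul, Finset.sum_neg_distrib, zero_add, one_mul] at h ⊢
    linear_combination h
  · have hi' : (i : ℕ) + 1 < d := by omega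
    simp only [hi, if_false]
    rw [Finset.sum_eq_single ⟨(i : ℕ) + 1, hi'⟩]
    · simp
    · intro j _ hj
      rw [if_neg (fun h => hj (Fin.ext h)), zero_mul]
    · simp

/-- The scalar `φ_f(T) = P·(T_0, …, T_{d-1})ᵀ`, a coefficient vector read in the basis
`1, x, …, x^{d-1}` of `F[x]/(f)`. -/
noncomputable def phi (f : F[X]) {d : ℕ} (P : Matrix (Fin d) (Fin d) F) :
    (ℕ → F) →ₗ[F] AdjoinRoot f :=
  Fintype.linearCombination F (fun i : Fin d => root f ^ (i : ℕ)) ∘ₗ P.mulVecLin ∘ₗ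
    LinearMap.funLeft F F Fin.val

lemma phi_apply (f : F[X]) {d : ℕ} (P : Matrix (Fin d) (Fin d) F) (T : ℕ → F) :
    phi f P T = ∑ i, (P *ᵥ fun l => T l) i • root f ^ (i : ℕ) := by
  simp only [phi, LinearMap.coe_comp, Function.comp_apply, Fintype.linearCombination_apply]
  rfl

variable {f : F[X]} {d : ℕ} {P : Matrix (Fin d) (Fin d) F} {T : ℕ → F}

lemma phi_shift_one (hf : f.Monic) (hd : f.natDegree = d)
    (hPX : P * (companionMat f d)ᵀ = companionMat f d * P) (hT : T ∈ annihilatedSeqs f) :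
    phi f P (fun k => T (k + 1)) = root f * phi f P T := by
  rw [phi_apply, phi_apply, window_succ_eq_companionMat_transpose_mulVec hf hd hT, mulVec_mulVec,
    hPX, ← mulVec_mulVec, sum_companionMat_mulVec_smul_root_pow hf hd]

lemma phi_shift (hf : f.Monic) (hd : f.natDegree = d)
    (hPX : P * (companionMat f d)ᵀ = companionMat f d * P) (hT : T ∈ annihilatedSeqs f) (m : ℕ) :
    phi f P (fun k => T (k + m)) = root f ^ m * phi f P T := by
  induction m with
  | zero => simp
  | succ m ih =>
    rw [pow_succ', mul_assoc, ← ih, ← phi_shift_one hf hd hPX (shift_mem_annihilatedSeqs hT m)]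
    simp only [add_right_comm, add_assoc]

lemma phi_sum_coeff_smul_shift (hf : f.Monic) (hd : f.natDegree = d)
    (hPX : P * (companionMat f d)ᵀ = companionMat f d * P) (hT : T ∈ annihilatedSeqs f)
    {g : F[X]} {N : ℕ} (hN : g.natDegree < N) :
    phi f P (∑ m ∈ Finset.range N, g.coeff m • fun k => T (k + m)) = mk f g * phi f P T := by
  simp only [map_sum, map_smul, phi_shift hf hd hPX hT, ← smul_mul_assoc, ← Finset.sum_mul,
    ← aeval_eq_sum_range' hN, aeval_eq]

lemma linearIndependent_root_pow (hf : f.Monic) :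
    LinearIndependent F fun i : Fin f.natDegree => root f ^ (i : ℕ) := by
  have h := (powerBasis' hf).basis.linearIndependent
  rw [PowerBasis.coe_basis] at h
  exact h

lemma eq_zero_of_phi_eq_zero (hf : f.Monic) (hd : f.natDegree = d) (hP : P.det ≠ 0)
    (hT : T ∈ annihilatedSeqs f) (h : phi f P T = 0) : T = 0 := by
  subst hd
  have hPw : (P *ᵥ fun l => T l) = 0 := funext <|
    Fintype.linearIndependent_iff.mp (linearIndependent_root_pow hf) _ (by rwa [← phi_apply])
  have hw := eq_zero_of_mulVec_eq_zero hP hPw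
  exact eq_zero_of_mem_annihilatedSeqs hf hT fun l hl => congrFun hw ⟨l, hl⟩

end

section

open AdjoinRoot

variable {F : Type*} [Field F] {b : ℕ}

lemma mk_vecToPoly (f : F[X]) {d : ℕ} (v : Fin d → F) :
    mk f (vecToPoly v) = ∑ i, v i • root f ^ (i : ℕ) := by
  simp [vecToPoly, Algebra.smul_def]

lemma phiMat_map_mk_apply (f : F[X]) {d : ℕ} (P : Matrix (Fin d) (Fin d) F)
    (S : ℕ → Matrix (Fin b) (Fin b) F) (i j : Fin b) :
    (phiMat d P S).map (mk f) i j = phi f P fun k => S k i j := by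
  rw [phi_apply, ← mk_vecToPoly]
  rfl

lemma natDegree_le_matDeg (G : Matrix (Fin b) (Fin b) F[X]) (p j : Fin b) :
    (G p j).natDegree ≤ matDeg G :=
  Finset.le_sup (f := fun ij : Fin b × Fin b => (G ij.1 ij.2).natDegree) (Finset.mem_univ (p, j))

lemma sum_mul_matCoeff_apply (S : ℕ → Matrix (Fin b) (Fin b) F)
    (G : Matrix (Fin b) (Fin b) F[X]) (N : ℕ) (i j : Fin b) :
    (fun k => (∑ m ∈ Finset.range N, S (k + m) * matCoeff G m) i j)
      = ∑ p, ∑ m ∈ Finset.range N, (G p j).coeff m • fun k => S (k + m) i p := by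
  funext k
  simp only [Matrix.sum_apply, mul_apply, matCoeff, map_apply, Finset.sum_apply, Pi.smul_apply,
    smul_eq_mul, mul_comm]
  exact Finset.sum_comm

end

theorem stmt18_general {F : Type*} [Field F] (f : F[X]) (hmonic : f.Monic)
    (d : ℕ) (hd : f.natDegree = d) (b : ℕ)
    (S : ℕ → Matrix (Fin b) (Fin b) F)
    (hS : ∀ k : ℕ, ∑ i ∈ Finset.range (d + 1), f.coeff i • S (k + i) = 0)
    (P : Matrix (Fin d) (Fin d) F) (hP : P.det ≠ 0)
    (hPint : ∀ a : F[X], P * (Polynomial.aeval (companionMat f d) a)ᵀ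
        = Polynomial.aeval (companionMat f d) a * P)
    (G : Matrix (Fin b) (Fin b) F[X]) :
    ((phiMat d P (fun k => ∑ i ∈ Finset.range (matDeg G + 1),
          S (k + i) * matCoeff G i)).map (AdjoinRoot.mk f)
        = (phiMat d P S).map (AdjoinRoot.mk f) * G.map (AdjoinRoot.mk f))
    ∧ (SeqGen S G ↔
        ((phiMat d P S).map (AdjoinRoot.mk f) * G.map (AdjoinRoot.mk f) = 0 ∧ G.det ≠ 0)) := by
  have hPX : P * (companionMat f d)ᵀ = companionMat f d * P := by simpa using hPint X
  have hS_entry : ∀ i p, (fun k => S k i p) ∈ annihilatedSeqs f := fun i p k => by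
    simpa [hd, Matrix.sum_apply] using congrFun (congrFun (hS k) i) p
  set SG := fun k => ∑ m ∈ Finset.range (matDeg G + 1), S (k + m) * matCoeff G m
  have hSG_entry : ∀ i j, (fun k => SG k i j) ∈ annihilatedSeqs f := fun i j => by
    rw [sum_mul_matCoeff_apply]
    exact Submodule.sum_mem _ fun p _ => Submodule.sum_mem _ fun m _ =>
      Submodule.smul_mem _ _ (shift_mem_annihilatedSeqs (hS_entry i p) m)
  have key : (phiMat d P SG).map (AdjoinRoot.mk f)
      = (phiMat d P S).map (AdjoinRoot.mk f) * G.map (AdjoinRoot.mk f) := by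
    ext i j
    rw [phiMat_map_mk_apply, sum_mul_matCoeff_apply, map_sum, mul_apply]
    refine Finset.sum_congr rfl fun p _ => ?_
    rw [phi_sum_coeff_smul_shift hmonic hd hPX (hS_entry i p)
      (Nat.lt_succ_of_le (natDegree_le_matDeg G p j)), phiMat_map_mk_apply, map_apply, mul_comm]
  refine ⟨key, ⟨fun ⟨hdet, hgen⟩ => ⟨?_, hdet⟩, fun ⟨hzero, hdet⟩ => ⟨hdet, fun k => ?_⟩⟩⟩
  · rw [← key, show SG = 0 from funext hgen]
    ext i j
    rw [phiMat_map_mk_apply]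
    exact map_zero _
  · ext i j
    have hphi : phi f P (fun k => SG k i j) = 0 := by
      rw [← phiMat_map_mk_apply, key, hzero, Matrix.zero_apply]
    exact congrFun (eq_zero_of_phi_eq_zero hmonic hd hP (hSG_entry i j) hphi) k

/-- `φ_f(SG) = φ_f(S)·G` in `(F[x]/(f))^{b×b}`; consequently `G` generates `S` iff
`φ_f(S)·G = 0` over `F[x]/(f)` and `det G ≠ 0`. -/
theorem stmt18 {F : Type*} [Field F] (f : F[X]) (hmonic : f.Monic)
    (d : ℕ) (hd : f.natDegree = d) (hd1 : 1 ≤ d) (b : ℕ)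
    (S : ℕ → Matrix (Fin b) (Fin b) F)
    (hS : ∀ k : ℕ, ∑ i ∈ Finset.range (d + 1), f.coeff i • S (k + i) = 0)
    (P : Matrix (Fin d) (Fin d) F) (hP : P.det ≠ 0)
    (hPint : ∀ a : F[X], P * (Polynomial.aeval (companionMat f d) a)ᵀ
        = Polynomial.aeval (companionMat f d) a * P)
    (G : Matrix (Fin b) (Fin b) F[X]) :
    ((phiMat d P (fun k => ∑ i ∈ Finset.range (matDeg G + 1),
          S (k + i) * matCoeff G i)).map (AdjoinRoot.mk f)
        = (phiMat d P S).map (AdjoinRoot.mk f) * G.map (AdjoinRoot.mk f))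
    ∧ (SeqGen S G ↔
        ((phiMat d P S).map (AdjoinRoot.mk f) * G.map (AdjoinRoot.mk f) = 0 ∧ G.det ≠ 0)) :=
  stmt18_general f hmonic d hd b S hS P hP hPint G
end
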